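/- For density operators ρ and σ on a finite-dimensional Hilbert space, the fidelity F(ρ,σ) = ‖√ρ√σ‖₁² and trace distance satisfy 1 − √F(ρ,σ) ≤ (1/2)‖ρ − σ‖₁ ≤ √(1 − F(ρ,σ)) (the Fuchs–van de Graaf inequalities). -/

import Mathlib

/-
Write `A = √ρ`, `B = √σ` and `t = ‖AB‖₁ = √F`.

Lower bound: `Tr (A - B)² = 2 - 2 Re Tr (AB) ≥ 2 - 2t`, and the Powers–Størmer inequality
`Tr (A - B)² ≤ ‖A² - B²‖₁` holds because, with `S` the sign of `H = A - B`,
`Tr S (A² - B²) = Tr |H| (A + B)`, while `|H| (A + B) - H² = 2 (H⁺ B + H⁻ A)` has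
nonnegative trace.

Upper bound: polar decomposition gives a unitary `U` with `Tr (A B U) = t`. With `B' = B U`,
`ρ - σ = ½ ((A - B')(A + B')ᴴ + (A + B')(A - B')ᴴ)`, so pairing with the sign of `ρ - σ`
and Cauchy–Schwarz for the Hilbert–Schmidt inner product give
`‖ρ - σ‖₁ ≤ ‖A - B'‖₂ ‖A + B'‖₂ = √(2 - 2t) √(2 + 2t)`.
-/

open Matrix Kronecker BigOperators ComplexOrder

/-- The matrix square root `Matrix.PosSemidef.sqrt` as Mathlib (Dec 2024) defined it. -/
noncomputable def posSemidefSqrt {n : Type*} [Fintype n] [DecidableEq n] {A : Matrix n n ℂ}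
    (hA : A.PosSemidef) : Matrix n n ℂ :=
  (hA.1.eigenvectorUnitary : Matrix n n ℂ) * diagonal ((↑) ∘ Real.sqrt ∘ hA.1.eigenvalues) *
    star (hA.1.eigenvectorUnitary : Matrix n n ℂ)

noncomputable def traceNorm {n : Type*} [Fintype n] [DecidableEq n] (A : Matrix n n ℂ) : ℝ :=
  (posSemidefSqrt (Matrix.posSemidef_conjTranspose_mul_self A)).trace.re

open scoped Classical in
noncomputable def matSqrt {n : Type*} [Fintype n] [DecidableEq n] (A : Matrix n n ℂ) : Matrix n n ℂ :=
  if h : A.PosSemidef then posSemidefSqrt h else 0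

noncomputable def fidelity {n : Type*} [Fintype n] [DecidableEq n] (ρ σ : Matrix n n ℂ) : ℝ :=
  (traceNorm (matSqrt ρ * matSqrt σ)) ^ 2

def IsDensity {n : Type*} [Fintype n] [DecidableEq n] (ρ : Matrix n n ℂ) : Prop :=
  ρ.PosSemidef ∧ ρ.trace = 1

def SeparableState {a b : Type*} [Fintype a] [Fintype b] [DecidableEq a] [DecidableEq b]
    (ρ : Matrix (a × b) (a × b) ℂ) : Prop :=
  ∃ (m : ℕ) (p : Fin m → ℝ) (σ : Fin m → Matrix a a ℂ) (τ : Fin m → Matrix b b ℂ),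
    (∀ i, 0 ≤ p i) ∧ (∑ i, p i = 1) ∧ (∀ i, IsDensity (σ i)) ∧ (∀ i, IsDensity (τ i)) ∧
    ρ = ∑ i, (p i : ℂ) • (σ i ⊗ₖ τ i)

noncomputable def permUnitary {b : Type*} [Fintype b] [DecidableEq b] {k : ℕ}
    (π : Equiv.Perm (Fin k)) : Matrix (Fin k → b) (Fin k → b) ℂ :=
  Equiv.Perm.permMatrix ℂ (Equiv.arrowCongr π (Equiv.refl b))

def IsKExtension {a b : Type*} [Fintype a] [Fintype b] [DecidableEq a] [DecidableEq b] (m : ℕ)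
    (ρ : Matrix (a × b) (a × b) ℂ)
    (ω : Matrix (a × (Fin (m + 1) → b)) (a × (Fin (m + 1) → b)) ℂ) : Prop :=
  ω.PosSemidef ∧ ω.trace = 1 ∧
  (∀ π : Equiv.Perm (Fin (m + 1)),
    ((1 : Matrix a a ℂ) ⊗ₖ permUnitary π) * ω * ((1 : Matrix a a ℂ) ⊗ₖ permUnitary π)ᴴ = ω) ∧
  (∀ p q : a × b, ρ p q = ∑ r : Fin m → b, ω (p.1, Fin.cons p.2 r) (q.1, Fin.cons q.2 r))

/-- `ρ` is `k`-extendible (with `k` copies of the `B` system). -/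
def IsKExtendible {a b : Type*} [Fintype a] [Fintype b] [DecidableEq a] [DecidableEq b] (k : ℕ)
    (ρ : Matrix (a × b) (a × b) ℂ) : Prop :=
  ∃ m : ℕ, k = m + 1 ∧ ∃ ω, IsKExtension m ρ ω

def IsPOVM {x b : Type*} [Fintype x] [Fintype b] [DecidableEq b] (Λ : x → Matrix b b ℂ) : Prop :=
  (∀ i, (Λ i).PosSemidef) ∧ ∑ i, Λ i = 1

noncomputable def povmOut {a b x : Type*} [Fintype a] [Fintype b] [Fintype x] [DecidableEq x]
    (Λ : x → Matrix b b ℂ) (X : Matrix (a × b) (a × b) ℂ) : Matrix (a × x) (a × x) ℂ :=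
  fun p q => if p.2 = q.2 then ∑ j : b, ∑ j' : b, (Λ p.2) j j' * X (p.1, j') (q.1, j) else 0

noncomputable def loccDist {a b : Type*} [Fintype a] [Fintype b] [DecidableEq a] [DecidableEq b]
    (ρ σ : Matrix (a × b) (a × b) ℂ) : ℝ :=
  sSup {r : ℝ | ∃ (x : Type) (_ : Fintype x) (_ : DecidableEq x) (Λ : x → Matrix b b ℂ),
    IsPOVM Λ ∧ r = traceNorm (povmOut Λ ρ - povmOut Λ σ)}

open scoped MatrixOrder

lemma LinearMap.exists_linearIsometry_comp_eq_of_norm_eq {𝕜 E V : Type*} [RCLike 𝕜]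
    [AddCommGroup E] [Module 𝕜 E] [NormedAddCommGroup V] [InnerProductSpace 𝕜 V]
    [FiniteDimensional 𝕜 V] {f g : E →ₗ[𝕜] V} (h : ∀ x, ‖f x‖ = ‖g x‖) :
    ∃ W : V →ₗᵢ[𝕜] V, ∀ x, W (g x) = f x := by
  have hker : ker g ≤ ker f := fun x hx => by
    rw [mem_ker, ← norm_eq_zero, h, norm_eq_zero, ← mem_ker]
    exact hx
  let L : range g →ₗ[𝕜] V := (ker g).liftQ f hker ∘ₗ g.quotKerEquivRange.symm.toLinearMap
  have hL : ∀ x, L ⟨g x, mem_range_self g x⟩ = f x := fun x => by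
    simp [L]
  have hLnorm : ∀ y, ‖L y‖ = ‖y‖ := by
    rintro ⟨_, x, rfl⟩
    rw [hL, h]
    rfl
  exact ⟨(⟨L, hLnorm⟩ : range g →ₗᵢ[𝕜] V).extend, fun x => by
    rw [show g x = ((⟨g x, mem_range_self g x⟩ : range g) : V) from rfl,
      LinearIsometry.extend_apply]
    exact hL x⟩

namespace Matrix

variable {𝕜 n : Type*} [RCLike 𝕜] [Fintype n]

lemma IsHermitian.ofReal_re_trace {A : Matrix n n ℂ} (hA : A.IsHermitian) :
    (A.trace.re : ℂ) = A.trace :=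
  Complex.conj_eq_iff_re.mp (by rw [starRingEnd_apply, ← trace_conjTranspose, hA.eq])

lemma re_trace_mul_conjTranspose_le (X Y : Matrix n n 𝕜) :
    RCLike.re (X * Yᴴ).trace ≤
      √(RCLike.re (X * Xᴴ).trace) * √(RCLike.re (Y * Yᴴ).trace) := by
  classical
  -- the Hilbert–Schmidt inner product `⟪X, Y⟫ = Tr (Y Xᴴ)`
  let _ := toMatrixSeminormedAddCommGroup (1 : Matrix n n 𝕜) PosSemidef.one
  let _ := toMatrixInnerProductSpace (1 : Matrix n n 𝕜) PosSemidef.one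
  have h := re_inner_le_norm (𝕜 := 𝕜) Y X
  rw [norm_eq_sqrt_re_inner (𝕜 := 𝕜) X, norm_eq_sqrt_re_inner (𝕜 := 𝕜) Y] at h
  change RCLike.re (X * 1 * Yᴴ).trace ≤
    √(RCLike.re (Y * 1 * Yᴴ).trace) * √(RCLike.re (X * 1 * Xᴴ).trace) at h
  simp only [Matrix.mul_one] at h
  rwa [mul_comm √(RCLike.re (X * Xᴴ).trace)]

variable [DecidableEq n]

lemma exists_mul_eq_of_conjTranspose_mul_self_eq {X Y : Matrix n n 𝕜} (h : Xᴴ * X = Yᴴ * Y) :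
    ∃ W : Matrix n n 𝕜, Wᴴ * W = 1 ∧ W * Y = X := by
  let T := toEuclideanCLM (n := n) (𝕜 := 𝕜)
  have hnorm : ∀ v, ‖T X v‖ = ‖T Y v‖ := fun v => by
    rw [ContinuousLinearMap.apply_norm_eq_sqrt_inner_adjoint_left,
      ContinuousLinearMap.apply_norm_eq_sqrt_inner_adjoint_left,
      ← ContinuousLinearMap.star_eq_adjoint, ← ContinuousLinearMap.star_eq_adjoint,
      ← ContinuousLinearMap.mul_def, ← ContinuousLinearMap.mul_def, ← map_star, ← map_star,
      ← map_mul, ← map_mul, star_eq_conjTranspose, star_eq_conjTranspose, h]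
  obtain ⟨W, hW⟩ := LinearMap.exists_linearIsometry_comp_eq_of_norm_eq
    (f := (T X).toLinearMap) (g := (T Y).toLinearMap) hnorm
  have hTW : T (T.symm W.toContinuousLinearMap) = W.toContinuousLinearMap :=
    T.apply_symm_apply _
  refine ⟨T.symm W.toContinuousLinearMap, EquivLike.injective T ?_, EquivLike.injective T ?_⟩
  · rw [map_mul, map_one, ← star_eq_conjTranspose, map_star, hTW,
      ContinuousLinearMap.star_eq_adjoint]
    exact W.adjoint_comp_self
  · ext1 v
    rw [map_mul, ContinuousLinearMap.mul_def, hTW]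
    exact hW v

lemma exists_mul_cfcAbs_eq (M : Matrix n n 𝕜) :
    ∃ W : Matrix n n 𝕜, Wᴴ * W = 1 ∧ W * CFC.abs M = M :=
  exists_mul_eq_of_conjTranspose_mul_self_eq <| by
    rw [← star_eq_conjTranspose, ← CFC.abs_mul_abs, (CFC.abs_nonneg M).posSemidef.1.eq]

lemma IsHermitian.exists_mul_eq_cfcAbs {H : Matrix n n 𝕜} (hH : H.IsHermitian) :
    ∃ S : Matrix n n 𝕜,
      Sᴴ = S ∧ S * S = 1 ∧ S * H = CFC.abs H ∧ H * S = CFC.abs H := by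
  let sign : ℝ → ℝ := fun x => if 0 ≤ x then 1 else -1
  have hH' : IsSelfAdjoint H := hH
  -- `sign` is discontinuous at `0`, but the spectrum of a matrix is finite.
  have hcont : ContinuousOn sign (spectrum ℝ H) := H.finite_real_spectrum.continuousOn _
  have habs : CFC.abs H = cfc (fun x => sign x * x) H := by
    rw [CFC.abs_eq_cfc_norm H hH']
    refine cfc_congr fun x _ => ?_
    by_cases hx : 0 ≤ x <;> simp [sign, hx, abs_of_nonneg, abs_of_neg, not_le.mp]
  refine ⟨cfc sign H, (cfc_predicate sign H).star_eq, ?_, ?_, ?_⟩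
  · rw [← cfc_mul sign sign H, ← cfc_one ℝ H]
    refine cfc_congr fun x _ => ?_
    by_cases hx : 0 ≤ x <;> simp [sign, hx]
  · rw [habs, cfc_mul sign (fun x => x) H, cfc_id' ℝ H]
  · rw [habs, cfc_congr fun x _ => mul_comm (sign x) x, cfc_mul (fun x => x) sign H,
      cfc_id' ℝ H]

lemma PosSemidef.trace_mul_nonneg {A B : Matrix n n ℂ} (hA : A.PosSemidef) (hB : B.PosSemidef) :
    0 ≤ (A * B).trace := by
  have hR := CFC.sqrt_nonneg A
  calc 0 ≤ (CFC.sqrt A * B * CFC.sqrt A).trace := by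
        simpa [hR.posSemidef.1.eq] using (hB.conjTranspose_mul_mul_same (CFC.sqrt A)).trace_nonneg
    _ = (A * B).trace := by
        rw [trace_mul_cycle, CFC.sqrt_mul_sqrt_self A hA.nonneg]

lemma re_trace_sub_mul_sub_le_re_trace_cfcAbs_mul_add {A B : Matrix n n ℂ} (hA : A.PosSemidef)
    (hB : B.PosSemidef) :
    ((A - B) * (A - B)).trace.re ≤ (CFC.abs (A - B) * (A + B)).trace.re := by
  have identity : ∀ a b p q : Matrix n n ℂ, a - b = p - q →
      (p + q) * (a + b) - (a - b) * (a - b) = (p * b + q * a) + (p * b + q * a) := by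
    intro a b p q h
    obtain rfl : a = p - q + b := by rw [← h]; abel
    noncomm_ring
  have hPB := (CFC.posPart_nonneg (A - B)).posSemidef.trace_mul_nonneg hB
  have hNA := (CFC.negPart_nonneg (A - B)).posSemidef.trace_mul_nonneg hA
  have hdiff := congrArg (fun X => (trace X).re)
    (identity A B _ _ (CFC.posPart_sub_negPart (A - B)).symm)
  simp only [CFC.posPart_add_negPart (A - B), trace_sub, trace_add, Complex.sub_re,
    Complex.add_re] at hdiff
  linarith [(Complex.nonneg_iff.mp hPB).1, (Complex.nonneg_iff.mp hNA).1]

end Matrix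

section TraceNorm

variable {n : Type*} [Fintype n] [DecidableEq n]

lemma posSemidefSqrt_eq_cfcSqrt {A : Matrix n n ℂ} (hA : A.PosSemidef) :
    posSemidefSqrt hA = CFC.sqrt A := by
  rw [CFC.sqrt_eq_real_sqrt A hA.nonneg, cfcₙ_eq_cfc, hA.1.cfc_eq, IsHermitian.cfc,
    Unitary.conjStarAlgAut_apply]
  rfl

lemma matSqrt_eq_cfcSqrt {A : Matrix n n ℂ} (hA : A.PosSemidef) : matSqrt A = CFC.sqrt A := by
  rw [matSqrt, dif_pos hA, posSemidefSqrt_eq_cfcSqrt]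

lemma traceNorm_eq_re_trace_cfcAbs (A : Matrix n n ℂ) : traceNorm A = (CFC.abs A).trace.re := by
  rw [traceNorm, posSemidefSqrt_eq_cfcSqrt]
  rfl

lemma ofReal_traceNorm (A : Matrix n n ℂ) : (traceNorm A : ℂ) = (CFC.abs A).trace := by
  rw [traceNorm_eq_re_trace_cfcAbs]
  exact (CFC.abs_nonneg A).posSemidef.1.ofReal_re_trace

lemma traceNorm_nonneg (A : Matrix n n ℂ) : 0 ≤ traceNorm A := by
  rw [traceNorm_eq_re_trace_cfcAbs]
  exact (Complex.nonneg_iff.mp (CFC.abs_nonneg A).posSemidef.trace_nonneg).1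

lemma re_trace_mul_le_traceNorm {U : Matrix n n ℂ} (hU : Uᴴ * U = 1) (M : Matrix n n ℂ) :
    (U * M).trace.re ≤ traceNorm M := by
  obtain ⟨W, hW, hWM⟩ := exists_mul_cfcAbs_eq M
  set Q := CFC.sqrt (CFC.abs M)
  have hQ : Qᴴ = Q := (CFC.sqrt_nonneg _).posSemidef.1.eq
  have hQQ : Q * Q = CFC.abs M := CFC.sqrt_mul_sqrt_self _ (CFC.abs_nonneg M)
  have hUWQ : ((U * W * Q) * (U * W * Q)ᴴ).trace = (Q * Qᴴ).trace :=
    calc ((U * W * Q) * (U * W * Q)ᴴ).trace = ((U * W * Q)ᴴ * (U * W * Q)).trace :=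
          trace_mul_comm _ _
      _ = (Qᴴ * (Wᴴ * (Uᴴ * U) * W) * Q).trace := by simp only [conjTranspose_mul, mul_assoc]
      _ = (Q * Qᴴ).trace := by rw [hU, mul_one, hW, mul_one, trace_mul_comm]
  have hM : (Q * Qᴴ).trace.re = traceNorm M := by
    rw [hQ, hQQ, traceNorm_eq_re_trace_cfcAbs]
  calc (U * M).trace.re = ((U * W * Q) * Qᴴ).trace.re := by
        rw [hQ, mul_assoc _ Q, hQQ, mul_assoc U, hWM]
    _ ≤ √((U * W * Q) * (U * W * Q)ᴴ).trace.re * √(Q * Qᴴ).trace.re := by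
        simpa only [RCLike.re_to_complex] using re_trace_mul_conjTranspose_le (U * W * Q) Q
    _ = traceNorm M := by
        rw [hUWQ, hM, Real.mul_self_sqrt (traceNorm_nonneg M)]

lemma exists_trace_mul_eq_traceNorm (M : Matrix n n ℂ) :
    ∃ U : Matrix n n ℂ, U * Uᴴ = 1 ∧ (M * U).trace = traceNorm M := by
  obtain ⟨W, hW, hWM⟩ := exists_mul_cfcAbs_eq M
  refine ⟨Wᴴ, by rwa [conjTranspose_conjTranspose], ?_⟩
  rw [ofReal_traceNorm]
  conv_lhs => rw [← hWM, trace_mul_cycle, hW, one_mul]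

lemma re_trace_sub_mul_sub_le_traceNorm {A B : Matrix n n ℂ} (hA : A.PosSemidef)
    (hB : B.PosSemidef) : ((A - B) * (A - B)).trace.re ≤ traceNorm (A * A - B * B) := by
  obtain ⟨S, hSherm, hSS, hSH, hHS⟩ := (hA.1.sub hB.1).exists_mul_eq_cfcAbs
  have hsplit : (S * (A * A - B * B)).trace + (S * (A * A - B * B)).trace =
      (CFC.abs (A - B) * (A + B)).trace + (CFC.abs (A - B) * (A + B)).trace := by
    calc _ = (S * ((A - B) * (A + B) + (A + B) * (A - B))).trace := by
          rw [← trace_add, ← Matrix.mul_add]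
          congr 2
          noncomm_ring
      _ = (S * (A - B) * (A + B)).trace + ((A - B) * S * (A + B)).trace := by
          rw [Matrix.mul_add, trace_add, ← Matrix.mul_assoc, ← Matrix.mul_assoc,
            trace_mul_cycle S (A + B) (A - B)]
      _ = _ := by rw [hSH, hHS]
  have hdual := re_trace_mul_le_traceNorm (U := S) (by rw [hSherm, hSS]) (A * A - B * B)
  have := congrArg Complex.re hsplit
  simp only [Complex.add_re] at this
  linarith [re_trace_sub_mul_sub_le_re_trace_cfcAbs_mul_add hA hB]

lemma traceNorm_le_of_mul_conjTranspose_add {X C D : Matrix n n ℂ} (hX : X.IsHermitian)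
    (h : C * Dᴴ + D * Cᴴ = X + X) :
    traceNorm X ≤ √(C * Cᴴ).trace.re * √(D * Dᴴ).trace.re := by
  obtain ⟨S, hSherm, hSS, hSX, -⟩ := hX.exists_mul_eq_cfcAbs
  have hconj : (S * (D * Cᴴ)).trace.re = (S * C * Dᴴ).trace.re := by
    rw [← Complex.conj_re, starRingEnd_apply, ← trace_conjTranspose]
    simp only [conjTranspose_mul, conjTranspose_conjTranspose, hSherm]
    rw [trace_mul_cycle]
  have hSC : ((S * C) * (S * C)ᴴ).trace = (C * Cᴴ).trace :=
    calc ((S * C) * (S * C)ᴴ).trace = (S * (C * Cᴴ) * S).trace := by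
          rw [conjTranspose_mul, hSherm]
          simp only [Matrix.mul_assoc]
      _ = (C * Cᴴ).trace := by rw [trace_mul_cycle, hSS, Matrix.one_mul]
  have hsplit : (S * (X + X)).trace.re = 2 * (S * C * Dᴴ).trace.re := by
    rw [← h, Matrix.mul_add, trace_add, Complex.add_re, hconj, Matrix.mul_assoc]
    ring
  have hCS := re_trace_mul_conjTranspose_le (S * C) D
  simp only [RCLike.re_to_complex, hSC] at hCS
  rw [traceNorm_eq_re_trace_cfcAbs, ← hSX]
  rw [Matrix.mul_add, trace_add, Complex.add_re] at hsplit
  linarith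

lemma one_sub_traceNorm_mul_le {A B : Matrix n n ℂ} (hA : A.PosSemidef) (hB : B.PosSemidef)
    (hA1 : (A * A).trace = 1) (hB1 : (B * B).trace = 1) :
    1 - traceNorm (A * B) ≤ 1 / 2 * traceNorm (A * A - B * B) := by
  have hexpand : ((A - B) * (A - B)).trace.re = 2 - 2 * (A * B).trace.re := by
    rw [show (A - B) * (A - B) = A * A + B * B - A * B - B * A by noncomm_ring, trace_sub,
      trace_sub, trace_add, hA1, hB1, trace_mul_comm B A]
    simp only [Complex.sub_re, Complex.add_re, Complex.one_re]
    ring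
  have hdual : (A * B).trace.re ≤ traceNorm (A * B) := by
    simpa only [Matrix.one_mul] using re_trace_mul_le_traceNorm (U := 1) (by simp) (A * B)
  linarith [re_trace_sub_mul_sub_le_traceNorm hA hB]

lemma traceNorm_sub_le_sqrt_one_sub_sq {A B : Matrix n n ℂ} (hA : A.IsHermitian)
    (hB : B.IsHermitian) (hA1 : (A * A).trace = 1) (hB1 : (B * B).trace = 1) :
    1 / 2 * traceNorm (A * A - B * B) ≤ √(1 - traceNorm (A * B) ^ 2) := by
  obtain ⟨U, hU, hABU⟩ := exists_trace_mul_eq_traceNorm (A * B)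
  set t := traceNorm (A * B)
  set B' := B * U
  have hB'B' : B' * B'ᴴ = B * B := by
    rw [conjTranspose_mul, hB.eq, Matrix.mul_assoc, ← Matrix.mul_assoc U, hU, Matrix.one_mul]
  have hAB' : (A * B').trace = t := by rw [← Matrix.mul_assoc]; exact hABU
  have hB'A : (B' * A).trace = t := by rw [trace_mul_comm]; exact hAB'
  have hAB'h : (A * B'ᴴ).trace = t := by
    rw [← hA.eq, ← conjTranspose_mul, trace_conjTranspose, hB'A, Complex.star_def,
      Complex.conj_ofReal]
  have hdiff :
      (A - B') * (A + B')ᴴ + (A + B') * (A - B')ᴴ = (A * A - B * B) + (A * A - B * B) := by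
    rw [← hB'B']
    simp only [conjTranspose_sub, conjTranspose_add, hA.eq]
    noncomm_ring
  have hminus : ((A - B') * (A - B')ᴴ).trace.re = 2 - 2 * t := by
    rw [conjTranspose_sub, hA.eq,
      show (A - B') * (A - B'ᴴ) = A * A + B' * B'ᴴ - (A * B'ᴴ + B' * A) by noncomm_ring]
    simp only [hB'B', trace_sub, trace_add, hA1, hB1, hAB'h, hB'A, Complex.sub_re,
      Complex.add_re, Complex.one_re, Complex.ofReal_re]
    ring
  have hplus : ((A + B') * (A + B')ᴴ).trace.re = 2 + 2 * t := by
    rw [conjTranspose_add, hA.eq,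
      show (A + B') * (A + B'ᴴ) = A * A + B' * B'ᴴ + (A * B'ᴴ + B' * A) by noncomm_ring]
    simp only [hB'B', trace_add, hA1, hB1, hAB'h, hB'A, Complex.add_re, Complex.one_re,
      Complex.ofReal_re]
    ring
  have hX : (A * A - B * B).IsHermitian := by
    simpa only [hA.eq, hB.eq] using
      (isHermitian_mul_conjTranspose_self A).sub (isHermitian_mul_conjTranspose_self B)
  have key := traceNorm_le_of_mul_conjTranspose_add hX hdiff
  rw [hminus, hplus, ← Real.sqrt_mul' _ (by linarith [traceNorm_nonneg (A * B)]),
    show (2 - 2 * t) * (2 + 2 * t) = 2 ^ 2 * (1 - t ^ 2) by ring,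
    Real.sqrt_mul (by norm_num), Real.sqrt_sq (by norm_num)] at key
  linarith

end TraceNorm

theorem fuchs_van_de_graaf {n : Type*} [Fintype n] [DecidableEq n]
    (ρ σ : Matrix n n ℂ) (hρ : IsDensity ρ) (hσ : IsDensity σ) :
    1 - Real.sqrt (fidelity ρ σ) ≤ (1 / 2) * traceNorm (ρ - σ) ∧
    (1 / 2) * traceNorm (ρ - σ) ≤ Real.sqrt (1 - fidelity ρ σ) := by
  obtain ⟨hρ, hρ1⟩ := hρ
  obtain ⟨hσ, hσ1⟩ := hσ
  have hA : (CFC.sqrt ρ).PosSemidef := (CFC.sqrt_nonneg ρ).posSemidef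
  have hB : (CFC.sqrt σ).PosSemidef := (CFC.sqrt_nonneg σ).posSemidef
  have hAA : CFC.sqrt ρ * CFC.sqrt ρ = ρ := CFC.sqrt_mul_sqrt_self ρ hρ.nonneg
  have hBB : CFC.sqrt σ * CFC.sqrt σ = σ := CFC.sqrt_mul_sqrt_self σ hσ.nonneg
  have hF : fidelity ρ σ = traceNorm (CFC.sqrt ρ * CFC.sqrt σ) ^ 2 := by
    rw [fidelity, matSqrt_eq_cfcSqrt hρ, matSqrt_eq_cfcSqrt hσ]
  have hA1 : (CFC.sqrt ρ * CFC.sqrt ρ).trace = 1 := by rw [hAA, hρ1]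
  have hB1 : (CFC.sqrt σ * CFC.sqrt σ).trace = 1 := by rw [hBB, hσ1]
  have lower := one_sub_traceNorm_mul_le hA hB hA1 hB1
  have upper := traceNorm_sub_le_sqrt_one_sub_sq hA.1 hB.1 hA1 hB1
  rw [hAA, hBB] at lower upper
  rw [hF, Real.sqrt_sq (traceNorm_nonneg _)]
  exact ⟨lower, upper⟩
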